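/- arXiv:math/0609217 — 2 statements merged into one kernel-verified Lean document; each statement's English description precedes it below -/
import Mathlib

section
/- Let S be a finite nonempty set of points in R^n with nonnegative coordinates, and let N be the convex hull of the sets S_a = {x ∈ R^n : x_i ≥ a_i for all i} for a ∈ S. Let x = (x_1,...,x_n) satisfy 0 < x_i < 1 for all i. Then for every w ∈ N there exists an extreme point v of N such that x^w ≤ x^v, where x^w denotes x_1^{w_1}···x_n^{w_n}. -/
/-!
Put `c i = log (x i) < 0` and `l y = ∑ i, c i * y i`, so that `x ^ y = exp (l y)`. Since `l` is
strictly decreasing in every coordinate and every point of `N` lies above a point of the polytope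
`K = conv S`, the maximizers of `l` on `N` are exactly its maximizers on `K`. This set is therefore a
nonempty compact face of `N`; by Krein–Milman it has an extreme point, which is an extreme point
of `N` maximizing `x ^ y`.
-/

open Set

theorem exists_le_of_mem_convexHull_iUnion_Ici {E : Type*} [AddCommGroup E] [PartialOrder E]
    [IsOrderedAddMonoid E] [Module ℝ E] [PosSMulMono ℝ E] {S : Set E} {y : E}
    (hy : y ∈ convexHull ℝ (⋃ a ∈ S, Ici a)) : ∃ p ∈ convexHull ℝ S, p ≤ y := by
  refine convexHull_min (t := {z | ∃ p ∈ convexHull ℝ S, p ≤ z}) (fun z hz ↦ ?_) ?_ hy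
  · obtain ⟨a, ha, haz⟩ := mem_iUnion₂.1 hz
    exact ⟨a, subset_convexHull ℝ S ha, haz⟩
  · rintro y₁ ⟨p₁, hp₁, h₁⟩ y₂ ⟨p₂, hp₂, h₂⟩ a b ha hb hab
    exact ⟨a • p₁ + b • p₂, convex_convexHull ℝ S hp₁ hp₂ ha hb hab,
      add_le_add (smul_le_smul_of_nonneg_left h₁ ha) (smul_le_smul_of_nonneg_left h₂ hb)⟩

theorem ContinuousLinearMap.toExposed_eq_of_strictAnti {𝕜 E : Type*} [TopologicalSpace 𝕜] [Ring 𝕜]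
    [PartialOrder 𝕜] [AddCommMonoid E] [PartialOrder E] [TopologicalSpace E] [Module 𝕜 E]
    {l : StrongDual 𝕜 E} {K N : Set E} (hl : StrictAnti l) (hKN : K ⊆ N)
    (hdom : ∀ y ∈ N, ∃ p ∈ K, p ≤ y) : l.toExposed N = l.toExposed K := by
  ext x
  constructor
  · rintro ⟨hxN, hxmax⟩
    obtain ⟨p, hpK, hpx⟩ := hdom x hxN
    obtain rfl : p = x := by
      by_contra hne
      exact (hl (lt_of_le_of_ne hpx hne)).not_ge (hxmax p (hKN hpK))
    exact ⟨hpK, fun y hy ↦ hxmax y (hKN hy)⟩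
  · rintro ⟨hxK, hxmax⟩
    refine ⟨hKN hxK, fun y hy ↦ ?_⟩
    obtain ⟨p, hpK, hpy⟩ := hdom y hy
    exact (hl.antitone hpy).trans (hxmax p hpK)

theorem exists_mem_extremePoints_isMaxOn_of_strictAnti {E : Type*} [AddCommGroup E] [Module ℝ E]
    [PartialOrder E] [TopologicalSpace E] [T2Space E] [IsTopologicalAddGroup E]
    [ContinuousSMul ℝ E] [LocallyConvexSpace ℝ E] {l : StrongDual ℝ E} {K N : Set E}
    (hl : StrictAnti l) (hK : IsCompact K) (hKne : K.Nonempty) (hKN : K ⊆ N)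
    (hdom : ∀ y ∈ N, ∃ p ∈ K, p ≤ y) : ∃ v ∈ N.extremePoints ℝ, IsMaxOn l N v := by
  have hface : l.toExposed N = l.toExposed K :=
    l.toExposed_eq_of_strictAnti hl hKN hdom
  obtain ⟨p, hpK, hpmax⟩ := hK.exists_isMaxOn hKne l.continuous.continuousOn
  have hne : (l.toExposed N).Nonempty := hface ▸ ⟨p, hpK, hpmax⟩
  have hcompact : IsCompact (l.toExposed N) :=
    hface ▸ ContinuousLinearMap.toExposed.isExposed.isCompact hK
  obtain ⟨v, hv⟩ := hcompact.extremePoints_nonempty hne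
  exact ⟨v, ContinuousLinearMap.toExposed.isExposed.isExtreme.extremePoints_subset_extremePoints hv,
    (hv.1.2 · ·)⟩

theorem strictAnti_sum_smul_proj {ι : Type*} [Fintype ι] {c : ι → ℝ} (hc : ∀ i, c i < 0) :
    StrictAnti (∑ i, c i • ContinuousLinearMap.proj i : StrongDual ℝ (ι → ℝ)) := by
  intro y z hyz
  obtain ⟨hle, i, hlt⟩ := Pi.lt_def.1 hyz
  simp only [sum_apply, smul_apply, ContinuousLinearMap.proj_apply, smul_eq_mul]
  exact Finset.sum_lt_sum (fun j _ ↦ mul_le_mul_of_nonpos_left (hle j) (hc j).le)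
    ⟨i, Finset.mem_univ i, mul_lt_mul_of_neg_left hlt (hc i)⟩

theorem stmt2_general (n : ℕ) (S : Finset (Fin n → ℝ)) (hS : S.Nonempty)
    (N : Set (Fin n → ℝ))
    (hN : N = convexHull ℝ (⋃ a ∈ S, {x : Fin n → ℝ | ∀ i, a i ≤ x i}))
    (x : Fin n → ℝ) (hx : ∀ i, x i ∈ Set.Ioo (0 : ℝ) 1)
    (w : Fin n → ℝ) (hw : w ∈ N) :
    ∃ v ∈ Set.extremePoints ℝ N, (∏ i, x i ^ w i) ≤ ∏ i, x i ^ v i := by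
  set l : StrongDual ℝ (Fin n → ℝ) := ∑ i, Real.log (x i) • ContinuousLinearMap.proj i
  have hl : StrictAnti l := strictAnti_sum_smul_proj fun i ↦ Real.log_neg (hx i).1 (hx i).2
  have hmonomial (y : Fin n → ℝ) : ∏ i, x i ^ y i = Real.exp (l y) := by
    simp [l, Real.rpow_def_of_pos (hx _).1, Real.exp_sum]
  replace hN : N = convexHull ℝ (⋃ a ∈ (S : Set (Fin n → ℝ)), Ici a) := by
    simpa only [Ici, Pi.le_def, Finset.mem_coe] using hN
  obtain ⟨v, hv, hvmax⟩ := exists_mem_extremePoints_isMaxOn_of_strictAnti hl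
    (S.finite_toSet.isCompact_convexHull ℝ) (hS.to_set.convexHull)
    (hN ▸ convexHull_mono (fun a ha ↦ mem_iUnion₂.2 ⟨a, ha, self_mem_Ici⟩))
    (fun y hy ↦ exists_le_of_mem_convexHull_iUnion_Ici (hN ▸ hy))
  refine ⟨v, hv, ?_⟩
  rw [hmonomial, hmonomial]
  exact Real.exp_le_exp.2 (hvmax hw)

/-- Lemma 3.1: for x in the open unit cube and w in the Newton polyhedron generated by S,
there is an extreme point v with x^w ≤ x^v. -/
theorem stmt2 (n : ℕ) (S : Finset (Fin n → ℝ)) (hS : S.Nonempty)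
    (hnn : ∀ a ∈ S, ∀ i, 0 ≤ a i)
    (N : Set (Fin n → ℝ))
    (hN : N = convexHull ℝ (⋃ a ∈ S, {x : Fin n → ℝ | ∀ i, a i ≤ x i}))
    (x : Fin n → ℝ) (hx : ∀ i, x i ∈ Set.Ioo (0 : ℝ) 1)
    (w : Fin n → ℝ) (hw : w ∈ N) :
    ∃ v ∈ Set.extremePoints ℝ N, (∏ i, x i ^ w i) ≤ ∏ i, x i ^ v i :=
  stmt2_general n S hS N hN x hx w hw
end

section
/- Let v_0, v_1, ..., v_n ∈ R^n be points such that v_1 − v_0, ..., v_n − v_0 are linearly independent. Suppose x ∈ (0,1)^n and C > 1 are such that C^{-1} ≤ x^{v_l}/x^{v_0} ≤ C for all l = 1,...,n, where x^v = ∏_i x_i^{v_i}. Then there is a constant ε > 0, depending only on v_0,...,v_n and C (not on x), such that x_k ≥ ε for every coordinate k. -/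
/-!
Taking logarithms turns the monomial bounds into the linear estimate
`|(A *ᵥ log x) l| ≤ log C`, where the rows of the invertible matrix `A` are the differences
`v (l + 1) - v 0`. Inverting `A` bounds every `|log x k|` by `‖A⁻¹‖ * log C` (`ℓ∞` operator
norm), a constant independent of `x`, so each `x k` is at least `exp (-‖A⁻¹‖ * log C)`.
-/

open Real Matrix
open scoped Matrix.Norms.Operator

lemma Real.prod_rpow_pos {ι : Type*} [Fintype ι] {x : ι → ℝ} (hx : ∀ i, 0 < x i) (w : ι → ℝ) :
    0 < ∏ i, x i ^ w i :=
  Finset.prod_pos fun i _ => rpow_pos_of_pos (hx i) _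

lemma Real.log_prod_rpow {ι : Type*} [Fintype ι] {x : ι → ℝ} (hx : ∀ i, 0 < x i) (w : ι → ℝ) :
    log (∏ i, x i ^ w i) = w ⬝ᵥ fun i => log (x i) := by
  rw [log_prod fun i _ => (rpow_pos_of_pos (hx i) _).ne']
  exact Finset.sum_congr rfl fun i _ => log_rpow (hx i) _

lemma Real.log_prod_rpow_div_prod_rpow {ι : Type*} [Fintype ι] {x : ι → ℝ} (hx : ∀ i, 0 < x i)
    (w u : ι → ℝ) :
    log ((∏ i, x i ^ w i) / ∏ i, x i ^ u i) = (w - u) ⬝ᵥ fun i => log (x i) := by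
  rw [log_div (prod_rpow_pos hx w).ne' (prod_rpow_pos hx u).ne', log_prod_rpow hx,
    log_prod_rpow hx, sub_dotProduct]

lemma Real.abs_log_le_log_of_inv_le_of_le {r C : ℝ} (hr : 0 < r) (h₁ : C⁻¹ ≤ r) (h₂ : r ≤ C) :
    |log r| ≤ log C := by
  have hC : 0 < C := hr.trans_le h₂
  rw [abs_le]
  exact ⟨by simpa only [log_inv] using log_le_log (inv_pos.2 hC) h₁, log_le_log hr h₂⟩

lemma Matrix.norm_le_norm_inv_mul_norm_mulVec {m : Type*} [Fintype m] [DecidableEq m]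
    {A : Matrix m m ℝ} (hA : IsUnit A) (y : m → ℝ) : ‖y‖ ≤ ‖A⁻¹‖ * ‖A *ᵥ y‖ := by
  have hy : A⁻¹ *ᵥ (A *ᵥ y) = y := by
    rw [mulVec_mulVec, nonsing_inv_mul A ((isUnit_iff_isUnit_det A).mp hA), one_mulVec]
  simpa only [hy] using linfty_opNorm_mulVec A⁻¹ (A *ᵥ y)

theorem stmt3_general (n : ℕ) (v : Fin (n + 1) → (Fin n → ℝ))
    (hli : LinearIndependent ℝ (fun l : Fin n => v l.succ - v 0))
    (C : ℝ) :
    ∃ ε : ℝ, 0 < ε ∧ ∀ x : Fin n → ℝ, (∀ i, x i ∈ Set.Ioo (0 : ℝ) 1) →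
      (∀ l : Fin n,
        C⁻¹ ≤ (∏ i, x i ^ v l.succ i) / (∏ i, x i ^ v 0 i) ∧
        (∏ i, x i ^ v l.succ i) / (∏ i, x i ^ v 0 i) ≤ C) →
      ∀ k, ε ≤ x k := by
  set A : Matrix (Fin n) (Fin n) ℝ := of fun l => v l.succ - v 0
  have hA : IsUnit A := linearIndependent_rows_iff_isUnit.mp hli
  refine ⟨exp (-(‖A⁻¹‖ * |log C|)), exp_pos _, fun x hx hbounds k => ?_⟩
  have hxpos : ∀ i, 0 < x i := fun i => (hx i).1
  set y : Fin n → ℝ := fun i => log (x i)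
  have hAy : ‖A *ᵥ y‖ ≤ |log C| := by
    refine (pi_norm_le_iff_of_nonneg (abs_nonneg _)).2 fun l => ?_
    have hratio := log_prod_rpow_div_prod_rpow hxpos (v l.succ) (v 0)
    obtain ⟨hlow, hhigh⟩ := hbounds l
    rw [norm_eq_abs]
    calc |(A *ᵥ y) l| = |log ((∏ i, x i ^ v l.succ i) / ∏ i, x i ^ v 0 i)| := by rw [hratio]; rfl
      _ ≤ log C := abs_log_le_log_of_inv_le_of_le
          (div_pos (prod_rpow_pos hxpos _) (prod_rpow_pos hxpos _)) hlow hhigh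
      _ ≤ |log C| := le_abs_self _
  have hyk : |y k| ≤ ‖A⁻¹‖ * |log C| :=
    calc |y k| ≤ ‖y‖ := norm_le_pi_norm y k
      _ ≤ ‖A⁻¹‖ * ‖A *ᵥ y‖ := norm_le_norm_inv_mul_norm_mulVec hA y
      _ ≤ ‖A⁻¹‖ * |log C| := mul_le_mul_of_nonneg_left hAy (norm_nonneg _)
  calc exp (-(‖A⁻¹‖ * |log C|)) ≤ exp (y k) := exp_le_exp.2 (neg_le_of_abs_le hyk)
    _ = x k := exp_log (hxpos k)

/-- Lemma 3.3: if the monomials x^{v_l} for an affinely spanning family v_0,...,v_n are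
pairwise comparable within a factor C, then x is bounded away from the coordinate
hyperplanes by a constant depending only on the v_l and C. -/
theorem stmt3 (n : ℕ) (v : Fin (n + 1) → (Fin n → ℝ))
    (hli : LinearIndependent ℝ (fun l : Fin n => v l.succ - v 0))
    (C : ℝ) (hC : 1 < C) :
    ∃ ε : ℝ, 0 < ε ∧ ∀ x : Fin n → ℝ, (∀ i, x i ∈ Set.Ioo (0 : ℝ) 1) →
      (∀ l : Fin n,
        C⁻¹ ≤ (∏ i, x i ^ v l.succ i) / (∏ i, x i ^ v 0 i) ∧
        (∏ i, x i ^ v l.succ i) / (∏ i, x i ^ v 0 i) ≤ C) →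
      ∀ k, ε ≤ x k :=
  stmt3_general n v hli C
end
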